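/- Every collection of uncountably many finite sets contains an uncountable Δ-system: there is an uncountable subcollection and a fixed finite set r (the root) such that any two distinct members of the subcollection intersect exactly in r. -/

import Mathlib

/-!
Some layer `{x ∈ A | x.ncard = n}` is uncountable, so it suffices to treat families of
`n`-element sets, by induction on `n`. If some point `a` lies in uncountably many members,
delete `a` from them, find a Δ-system among the resulting `n - 1`-element sets, and put `a`
back into its root. Otherwise a maximal pairwise disjoint subfamily is uncountable, since a
countable one would have a countable union meeting every nonempty member of `A`; it is a
Δ-system with empty root.
-/

namespace Set

variable {α β γ : Type*}

theorem exists_not_countable_fiber [Countable γ] {s : Set β} (hs : ¬s.Countable) (f : β → γ) :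
    ∃ c, ¬{x ∈ s | f x = c}.Countable := by
  by_contra! h
  exact hs ((countable_iUnion h).mono fun x hx =>
    mem_iUnion_of_mem (f x) (mem_sep hx (rfl : f x = f x)))

theorem exists_maximal_pairwise_disjoint_subset (A : Set (Set α)) :
    ∃ D, Maximal (fun D => D ⊆ A ∧ D.Pairwise Disjoint) D := by
  refine zorn_subset _ fun c hc hchain => ⟨⋃₀ c, ⟨sUnion_subset fun d hd => (hc hd).1, ?_⟩,
    fun _ => subset_sUnion_of_mem⟩
  exact (pairwise_sUnion hchain.directedOn).2 fun d hd => (hc hd).2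

theorem exists_not_countable_pairwise_disjoint {A : Set (Set α)} (hcount : ∀ x ∈ A, x.Countable)
    (hA : ¬A.Countable) (hpt : ∀ a, {x ∈ A | a ∈ x}.Countable) :
    ∃ D ⊆ A, ¬D.Countable ∧ D.Pairwise Disjoint := by
  obtain ⟨D, ⟨hDA, hD⟩, hDmax⟩ := exists_maximal_pairwise_disjoint_subset A
  refine ⟨D, hDA, fun hDc => hA ?_, hD⟩
  have hmeet : ∀ x ∈ A, x ≠ ∅ → (x ∩ ⋃₀ D).Nonempty := by
    intro x hxA hx
    by_contra! h
    rw [← disjoint_iff_inter_eq_empty, disjoint_sUnion_right] at h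
    have hxD : x ∈ D := hDmax
      ⟨insert_subset hxA hDA, hD.insert fun d hd _ => ⟨h d hd, (h d hd).symm⟩⟩
      (subset_insert x D) (mem_insert x D)
    exact hx (disjoint_self.mp (h x hxD))
  have hU : (⋃₀ D).Countable := hDc.sUnion fun x hx => hcount x (hDA hx)
  refine ((countable_singleton ∅).union (hU.biUnion fun a _ => hpt a)).mono fun x hx => ?_
  rcases eq_or_ne x ∅ with rfl | hne
  · exact Or.inl rfl
  · obtain ⟨a, hax, haD⟩ := hmeet x hx hne
    exact Or.inr (mem_biUnion haD ⟨hx, hax⟩)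

def IsDeltaSystem (A : Set (Set α)) (r : Set α) : Prop :=
  A.Pairwise fun x y => x ∩ y = r

theorem Pairwise.isDeltaSystem_empty {D : Set (Set α)} (hD : D.Pairwise Disjoint) :
    IsDeltaSystem D ∅ :=
  fun _ hx _ hy hxy => disjoint_iff_inter_eq_empty.mp (hD hx hy hxy)

theorem injOn_sdiff_singleton (a : α) : InjOn (· \ {a}) {x : Set α | a ∈ x} := by
  intro x (hx : a ∈ x) y (hy : a ∈ y) h
  rw [← insert_sdiff_self_of_mem hx, ← insert_sdiff_self_of_mem hy]
  exact congrArg (insert a) h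

theorem IsDeltaSystem.of_image_sdiff_singleton {a : α} {B : Set (Set α)} {r : Set α}
    (hB : ∀ x ∈ B, a ∈ x) (h : IsDeltaSystem ((· \ {a}) '' B) r) :
    IsDeltaSystem B (insert a r) := by
  intro x hx y hy hxy
  have hne : x \ {a} ≠ y \ {a} := fun h => hxy (injOn_sdiff_singleton a (hB x hx) (hB y hy) h)
  rw [← h (mem_image_of_mem _ hx) (mem_image_of_mem _ hy) hne, ← sdiff_inter_distrib_right,
    insert_sdiff_self_of_mem (mem_inter (hB x hx) (hB y hy))]

theorem exists_isDeltaSystem_of_ncard_eq (n : ℕ) {A : Set (Set α)} (hfin : ∀ x ∈ A, x.Finite)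
    (hcard : ∀ x ∈ A, x.ncard = n) (hA : ¬A.Countable) :
    ∃ A' ⊆ A, ¬A'.Countable ∧ ∃ r : Set α, r.Finite ∧ IsDeltaSystem A' r := by
  induction n generalizing A with
  | zero =>
    refine absurd ((countable_singleton ∅).mono fun x hx => ?_) hA
    exact (ncard_eq_zero (hfin x hx)).mp (hcard x hx)
  | succ n ih =>
    by_cases hpt : ∀ a, {x ∈ A | a ∈ x}.Countable
    · obtain ⟨D, hDA, hDc, hD⟩ :=
        exists_not_countable_pairwise_disjoint (fun x hx => (hfin x hx).countable) hA hpt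
      exact ⟨D, hDA, hDc, ∅, finite_empty, hD.isDeltaSystem_empty⟩
    push Not at hpt
    obtain ⟨a, hB⟩ := hpt
    set B := {x ∈ A | a ∈ x}
    obtain ⟨C, hCB, hC, r, hr, hCr⟩ := ih (A := (· \ {a}) '' B)
      (by rintro _ ⟨x, hx, rfl⟩; exact (hfin x hx.1).sdiff)
      (by rintro _ ⟨x, hx, rfl⟩; rw [ncard_sdiff_singleton_of_mem hx.2, hcard x hx.1]; rfl)
      (fun h => hB (countable_of_injective_of_countable_image
        ((injOn_sdiff_singleton a).mono fun _ hx => hx.2) h))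
    obtain ⟨B₀, hB₀B, rfl⟩ := subset_image_iff.mp hCB
    exact ⟨B₀, fun x hx => (hB₀B hx).1, fun h => hC (h.image _), insert a r, hr.insert a,
      hCr.of_image_sdiff_singleton fun x hx => (hB₀B hx).2⟩

end Set

/-- The Δ-system lemma: every uncountable collection of finite sets contains an
uncountable Δ-system, i.e. an uncountable subcollection whose members pairwise
intersect in one fixed finite root `r`. -/
theorem delta_system_lemma {α : Type*} (A : Set (Set α))
    (hfin : ∀ x ∈ A, x.Finite) (hunc : ¬ A.Countable) :
    ∃ A' ⊆ A, ¬ A'.Countable ∧ ∃ r : Set α, r.Finite ∧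
      ∀ x ∈ A', ∀ y ∈ A', x ≠ y → x ∩ y = r := by
  obtain ⟨n, hn⟩ := Set.exists_not_countable_fiber hunc Set.ncard
  obtain ⟨A', hA'n, hA', r, hr, hA'r⟩ := Set.exists_isDeltaSystem_of_ncard_eq n
    (fun x hx => hfin x hx.1) (fun x hx => hx.2) hn
  exact ⟨A', hA'n.trans (Set.sep_subset _ _), hA', r, hr, hA'r⟩
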